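/- Let n ≥ 1, let W(x,t) = (4πt)^{-n/2} e^{-|x|²/(4t)} for t > 0, E = {(x,t) : t > 0, W(x,t) ≥ 1}, and 𝓗(x,t) = (1/4) χ_E(x,t) |x|²/t². Then ∬_{ℝⁿ×ℝ} s 𝓗(y,s) dy ds = σ(S^{n-1}) · n^{(n+2)/2} · Γ((n+4)/2) / ( 2 (n+2)^{(n+6)/2} π^{(n+2)/2} ), where σ(S^{n-1}) is the surface measure of the unit sphere in ℝⁿ and Γ is the Euler gamma function. -/

import Mathlib

open MeasureTheory Real

/-- The Weierstrass (Gauss–Weierstrass heat) kernel on `ℝⁿ`: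
`W(x,t) = (4πt)^{-n/2} e^{-|x|²/(4t)}` for `t > 0`. -/
noncomputable def weierstrassW (n : ℕ) (x : EuclideanSpace ℝ (Fin n)) (t : ℝ) : ℝ :=
  (4 * Real.pi * t) ^ (-(n : ℝ) / 2) * Real.exp (-‖x‖ ^ 2 / (4 * t))

/-- The parabolic mean value kernel for the heat equation:
`𝓗(x,t) = (1/4) |x|²/t²` on the unit heat ball `E = {(x,t) : t > 0, W(x,t) ≥ 1}`,
and `0` elsewhere. -/
noncomputable def heatMVKernel (n : ℕ) (p : EuclideanSpace ℝ (Fin n) × ℝ) : ℝ :=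
  if 0 < p.2 ∧ 1 ≤ weierstrassW n p.1 p.2 then (1 / 4) * ‖p.1‖ ^ 2 / p.2 ^ 2 else 0

/-- The surface measure `σ(S^{n-1})` of the unit sphere in `ℝⁿ`. -/
noncomputable def sphereSurfaceMeasure (n : ℕ) : ℝ :=
  (((volume : Measure (EuclideanSpace ℝ (Fin n))).toSphere) Set.univ).toReal

section Aux

open Set Metric

lemma heat_cond (n : ℕ) (x : EuclideanSpace ℝ (Fin n)) {s : ℝ} (hs : 0 < s) :
    (1 ≤ weierstrassW n x s) ↔ ‖x‖ ^ 2 ≤ -(2 * n * s * Real.log (4 * Real.pi * s)) := by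
  have h4s : 0 < 4 * Real.pi * s := by positivity
  have h4 : (0:ℝ) < 4 * s := by linarith
  rw [weierstrassW, Real.rpow_def_of_pos h4s, ← Real.exp_add, Real.one_le_exp_iff]
  have hnd : -‖x‖ ^ 2 / (4 * s) = -(‖x‖ ^ 2 / (4 * s)) := neg_div _ _
  constructor
  · intro h
    have h2 : ‖x‖ ^ 2 / (4 * s) ≤ Real.log (4 * Real.pi * s) * (-(n:ℝ) / 2) := by
      linarith [hnd]
    have h3 := (div_le_iff₀ h4).mp h2
    calc ‖x‖ ^ 2 ≤ Real.log (4 * Real.pi * s) * (-(n:ℝ) / 2) * (4 * s) := h3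
      _ = -(2 * n * s * Real.log (4 * Real.pi * s)) := by ring
  · intro h
    have h3 : ‖x‖ ^ 2 ≤ Real.log (4 * Real.pi * s) * (-(n:ℝ) / 2) * (4 * s) := by
      calc ‖x‖ ^ 2 ≤ -(2 * n * s * Real.log (4 * Real.pi * s)) := h
        _ = Real.log (4 * Real.pi * s) * (-(n:ℝ) / 2) * (4 * s) := by ring
    have h2 := (div_le_iff₀ h4).mpr h3
    linarith [hnd]

lemma heatMVKernel_measurable (n : ℕ) : Measurable (heatMVKernel n) := by
  unfold heatMVKernel weierstrassW
  have hW : Measurable fun p : EuclideanSpace ℝ (Fin n) × ℝ =>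
      (4 * Real.pi * p.2) ^ (-(n:ℝ) / 2) * Real.exp (-‖p.1‖ ^ 2 / (4 * p.2)) := by
    fun_prop
  refine Measurable.ite ?_ (by fun_prop) measurable_const
  exact (measurableSet_lt measurable_const measurable_snd).inter
      (measurableSet_le measurable_const hW)

lemma sqrt_pow_eq_rpow {B : ℝ} (hB : 0 ≤ B) (m : ℕ) : Real.sqrt B ^ m = B ^ ((m:ℝ)/2) := by
  rw [Real.sqrt_eq_rpow, ← Real.rpow_natCast (B ^ (1/2:ℝ)) m, ← Real.rpow_mul hB]
  congr 1; ring

lemma heatMVKernel_nonneg (n : ℕ) (p : EuclideanSpace ℝ (Fin n) × ℝ) :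
    0 ≤ p.2 * heatMVKernel n p := by
  unfold heatMVKernel
  split_ifs with h
  · have := h.1; positivity
  · simp

lemma key_const {a : ℝ} (ha : 0 < a) :
    (2*a) ^ ((a+2)/2) / (4*(a+2)) * ((4*Real.pi)⁻¹) ^ ((a+2)/2)
        * (1/((a+2)/2)) ^ ((a+4)/2)
      = a ^ ((a+2)/2) / (2*(a+2) ^ ((a+6)/2) * Real.pi ^ ((a+2)/2)) := by
  have hπ := Real.pi_pos
  have h2 : (0:ℝ) < a + 2 := by linarith
  have hL : (0:ℝ) < (2*a) ^ ((a+2)/2) / (4*(a+2)) * ((4*Real.pi)⁻¹) ^ ((a+2)/2)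
        * (1/((a+2)/2)) ^ ((a+4)/2) := by positivity
  have hR : (0:ℝ) < a ^ ((a+2)/2) / (2*(a+2) ^ ((a+6)/2) * Real.pi ^ ((a+2)/2)) := by positivity
  rw [← Real.exp_log hL, ← Real.exp_log hR]
  congr 1
  have h4 : Real.log 4 = 2 * Real.log 2 := by
    rw [show (4:ℝ) = 2^(2:ℕ) by norm_num, Real.log_pow]; push_cast; ring
  simp (disch := positivity) only [Real.log_mul, Real.log_div, Real.log_inv, Real.log_rpow,
    one_div]
  rw [h4]
  ring

lemma sigma_eq (n : ℕ) :
    sphereSurfaceMeasure n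
      = n * (volume (ball (0 : EuclideanSpace ℝ (Fin n)) 1)).toReal := by
  rw [sphereSurfaceMeasure, Measure.toSphere_apply_univ, ENNReal.toReal_mul]
  simp [finrank_euclideanSpace_fin]

lemma inner_integral (n : ℕ) (hn : 1 ≤ n) {s : ℝ} (hs : 0 < s) :
    ∫ y : EuclideanSpace ℝ (Fin n), s * heatMVKernel n (y, s)
      = sphereSurfaceMeasure n
          * Real.sqrt (-(2 * n * s * Real.log (4 * Real.pi * s))) ^ (n + 2)
          / (4 * s * ((n : ℝ) + 2)) := by
  haveI : Nonempty (Fin n) := Fin.pos_iff_nonempty.mp hn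
  haveI : Nontrivial (EuclideanSpace ℝ (Fin n)) :=
    inferInstance
  set B : ℝ := -(2 * n * s * Real.log (4 * Real.pi * s)) with hB
  set G : ℝ → ℝ := fun r => if r ^ 2 ≤ B then s * ((1 / 4) * r ^ 2 / s ^ 2) else 0 with hG
  have hpt : ∀ y : EuclideanSpace ℝ (Fin n), s * heatMVKernel n (y, s) = G ‖y‖ := by
    intro y
    rw [heatMVKernel, hG]
    simp only [mul_ite, mul_zero]
    exact if_congr ⟨fun h => (heat_cond n y hs).mp h.2,
      fun h => ⟨hs, (heat_cond n y hs).mpr h⟩⟩ rfl rfl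
  simp_rw [hpt]
  rw [MeasureTheory.integral_fun_norm_addHaar volume G]
  simp only [finrank_euclideanSpace_fin]
  rw [sigma_eq n]
  -- radial integral
  have hrad : ∫ r in Ioi (0:ℝ), r ^ (n - 1) • G r
      = Real.sqrt B ^ (n + 2) / ((n:ℝ) + 2) / (4 * s) := by
    have hind : ∀ r ∈ Ioi (0:ℝ), r ^ (n - 1) • G r
        = (Ioc (0:ℝ) (Real.sqrt B)).indicator (fun r => r ^ (n + 1) / (4 * s)) r := by
      intro r hr
      have hr0 : (0:ℝ) < r := hr
      have hiff : r ^ 2 ≤ B ↔ r ≤ Real.sqrt B := by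
        rcases le_or_gt 0 B with hB0 | hB0
        · exact (Real.le_sqrt hr0.le hB0).symm
        · constructor
          · intro h; nlinarith
          · intro h
            have h0 : Real.sqrt B = 0 := Real.sqrt_eq_zero_of_nonpos hB0.le
            nlinarith [h0 ▸ h]
      rw [hG]
      simp only [smul_eq_mul]
      by_cases hc : r ≤ Real.sqrt B
      · rw [if_pos (hiff.mpr hc), Set.indicator_of_mem (Set.mem_Ioc.mpr ⟨hr0, hc⟩)]
        have hpow : r ^ (n - 1) * r ^ 2 = r ^ (n + 1) := by
          rw [← pow_add]; congr 1; omega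
        rw [← hpow]
        field_simp
      · rw [if_neg (fun h => hc (hiff.mp h)), mul_zero,
          Set.indicator_of_notMem (fun h => hc h.2)]
    rw [setIntegral_congr_fun measurableSet_Ioi hind,
      setIntegral_indicator measurableSet_Ioc,
      Set.inter_eq_self_of_subset_right Ioc_subset_Ioi_self]
    rw [integral_div]
    rw [← intervalIntegral.integral_of_le (Real.sqrt_nonneg B)]
    rw [integral_pow, zero_pow (by omega : n + 1 + 1 ≠ 0)]
    push_cast
    ring
  rw [hrad]
  simp only [nsmul_eq_mul, smul_eq_mul]
  field_simp
  simp only [measureReal_def]; ring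

end Aux

section Aux2
open Set Metric

lemma inner_integrable (n : ℕ) {s : ℝ} (hs : 0 < s) :
    Integrable (fun y : EuclideanSpace ℝ (Fin n) => s * heatMVKernel n (y, s)) := by
  set B : ℝ := -(2 * n * s * Real.log (4 * Real.pi * s)) with hBdef
  set R : ℝ := Real.sqrt B with hRdef
  set M0 : ℝ := s * ((1 / 4) * R ^ 2 / s ^ 2) with hM0
  have hmeas : Measurable fun y : EuclideanSpace ℝ (Fin n) => s * heatMVKernel n (y, s) :=
    measurable_const.mul ((heatMVKernel_measurable n).comp (measurable_id.prodMk measurable_const))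
  refine Integrable.mono'
    (g := (closedBall (0 : EuclideanSpace ℝ (Fin n)) R).indicator fun _ => M0)
    ?_ hmeas.aestronglyMeasurable ?_
  · exact IntegrableOn.integrable_indicator
      (integrableOn_const measure_closedBall_lt_top.ne) measurableSet_closedBall
  · refine Filter.Eventually.of_forall fun y => ?_
    rw [Real.norm_eq_abs, abs_of_nonneg (heatMVKernel_nonneg n (y, s))]
    by_cases hc : 0 < s ∧ 1 ≤ weierstrassW n y s
    · have hy2 : ‖y‖ ^ 2 ≤ B := (heat_cond n y hs).mp hc.2
      have hB0 : 0 ≤ B := le_trans (sq_nonneg _) hy2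
      have hmem : y ∈ closedBall (0 : EuclideanSpace ℝ (Fin n)) R := by
        rw [mem_closedBall_zero_iff]
        have h1 := Real.sqrt_le_sqrt hy2
        rwa [Real.sqrt_sq_eq_abs, abs_of_nonneg (norm_nonneg y)] at h1
      rw [Set.indicator_of_mem hmem, heatMVKernel, if_pos hc, hM0]
      have hRB : R ^ 2 = B := Real.sq_sqrt hB0
      have hle : ‖(y, s).1‖ ^ 2 ≤ R ^ 2 := by rw [hRB]; exact hy2
      calc s * (1 / 4 * ‖(y, s).1‖ ^ 2 / s ^ 2)
          = ‖(y, s).1‖ ^ 2 * (s / (4 * s ^ 2)) := by ring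
        _ ≤ R ^ 2 * (s / (4 * s ^ 2)) :=
            mul_le_mul_of_nonneg_right hle (by positivity)
        _ = s * (1 / 4 * R ^ 2 / s ^ 2) := by ring
    · rw [heatMVKernel, if_neg hc, mul_zero]
      refine Set.indicator_nonneg (fun _ _ => ?_) y
      positivity

lemma inner_lintegral (n : ℕ) (hn : 1 ≤ n) {s : ℝ} (hs : 0 < s) :
    ∫⁻ y : EuclideanSpace ℝ (Fin n), ENNReal.ofReal (s * heatMVKernel n (y, s))
      = ENNReal.ofReal (sphereSurfaceMeasure n
          * Real.sqrt (-(2 * n * s * Real.log (4 * Real.pi * s))) ^ (n + 2)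
          / (4 * s * ((n : ℝ) + 2))) := by
  rw [← ofReal_integral_eq_lintegral_ofReal (inner_integrable n hs)
    (Filter.Eventually.of_forall fun y => heatMVKernel_nonneg n (y, s)),
    inner_integral n hn hs]

lemma outer_value (n : ℕ) (hn : 1 ≤ n) {σ : ℝ} (hσ : 0 ≤ σ) :
    ∫⁻ s : ℝ, ENNReal.ofReal (if 0 < s then
        σ * Real.sqrt (-(2 * n * s * Real.log (4 * Real.pi * s))) ^ (n + 2)
          / (4 * s * ((n : ℝ) + 2)) else 0)
      = ENNReal.ofReal (σ * (2 * (n:ℝ)) ^ (((n:ℝ)+2)/2) / (4 * ((n:ℝ)+2))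
          * ((4 * Real.pi)⁻¹) ^ (((n:ℝ)+2)/2)
          * ((1/(((n:ℝ)+2)/2)) ^ (((n:ℝ)+4)/2) * Real.Gamma (((n:ℝ)+4)/2))) := by
  have hπ := Real.pi_pos
  set a : ℝ := (n : ℝ) with ha
  have ha0 : (0:ℝ) < a := by rw [ha]; exact_mod_cast hn
  set c : ℝ := (4 * Real.pi)⁻¹ with hc
  have hc0 : 0 < c := by positivity
  have hc1 : 4 * Real.pi * c = 1 := by rw [hc]; field_simp
  set g : ℝ → ℝ := fun s => if 0 < s then
      σ * Real.sqrt (-(2 * n * s * Real.log (4 * Real.pi * s))) ^ (n + 2)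
        / (4 * s * (a + 2)) else 0 with hg
  set CC : ℝ := σ * (2 * a) ^ ((a+2)/2) / (4 * (a+2)) with hCC
  have hCC0 : 0 ≤ CC := by
    rw [hCC]; positivity
  set h : ℝ → ℝ := fun s =>
      CC * (s ^ (a/2) * (Real.log ((4 * Real.pi * s)⁻¹)) ^ ((a+2)/2)) with hh
  -- step 1: support in Ioo 0 c
  have hzero : ∀ s : ℝ, s ∉ Ioo (0:ℝ) c → g s = 0 := by
    intro s hs
    simp only [hg]
    by_cases h0 : 0 < s
    · have hsc : c ≤ s := by
        by_contra hlt
        exact hs ⟨h0, lt_of_not_ge hlt⟩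
      have h1 : (1:ℝ) ≤ 4 * Real.pi * s := by
        calc (1:ℝ) = 4 * Real.pi * c := hc1.symm
          _ ≤ 4 * Real.pi * s := by gcongr
      have hlog : 0 ≤ Real.log (4 * Real.pi * s) := Real.log_nonneg h1
      have hB : -(2 * (n:ℝ) * s * Real.log (4 * Real.pi * s)) ≤ 0 := by
        have : 0 ≤ 2 * (n:ℝ) * s * Real.log (4 * Real.pi * s) := by positivity
        linarith
      rw [if_pos h0, Real.sqrt_eq_zero_of_nonpos hB, zero_pow (by omega : n + 2 ≠ 0)]
      simp
    · rw [if_neg h0]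
  have hindic : (fun s => ENNReal.ofReal (g s))
      = (Ioo (0:ℝ) c).indicator (fun s => ENNReal.ofReal (g s)) := by
    funext s
    by_cases hs : s ∈ Ioo (0:ℝ) c
    · rw [Set.indicator_of_mem hs]
    · rw [Set.indicator_of_notMem hs, hzero s hs, ENNReal.ofReal_zero]
  rw [hindic, lintegral_indicator measurableSet_Ioo]
  -- step 2: g = h on Ioo 0 c
  have hgh : ∀ s ∈ Ioo (0:ℝ) c, g s = h s := by
    intro s hs
    obtain ⟨hs0, hsc⟩ := hs
    have h1 : 4 * Real.pi * s ≤ 1 := by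
      calc 4 * Real.pi * s ≤ 4 * Real.pi * c := by gcongr
        _ = 1 := hc1
    have hL0 : 0 ≤ Real.log ((4 * Real.pi * s)⁻¹) := by
      rw [Real.log_inv]
      have := Real.log_nonpos (by positivity) h1
      linarith
    set L : ℝ := Real.log ((4 * Real.pi * s)⁻¹) with hLdef
    have hBL : -(2 * (n:ℝ) * s * Real.log (4 * Real.pi * s)) = 2 * a * s * L := by
      rw [hLdef, Real.log_inv, ha]; ring
    have hB0 : 0 ≤ 2 * a * s * L := by positivity
    simp only [hg, hh]
    rw [if_pos hs0, hBL, sqrt_pow_eq_rpow hB0]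
    have hcast : ((n + 2 : ℕ) : ℝ) / 2 = (a + 2) / 2 := by push_cast [ha]; ring
    rw [hcast]
    have hsplit : (2 * a * s * L) ^ ((a+2)/2)
        = (2 * a) ^ ((a+2)/2) * (s ^ ((a+2)/2) * L ^ ((a+2)/2)) := by
      rw [show 2 * a * s * L = (2 * a) * (s * L) by ring,
        Real.mul_rpow (by positivity) (by positivity),
        Real.mul_rpow hs0.le hL0]
    rw [hsplit, show s ^ ((a+2)/2) = s ^ (a/2) * s from by
      rw [show (a+2)/2 = a/2 + 1 by ring, Real.rpow_add_one hs0.ne']]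
    rw [hCC, ← hLdef]
    field_simp
  rw [setLIntegral_congr_fun measurableSet_Ioo
    (fun s hs => by rw [hgh s hs])]
  -- step 3: change of variables
  set φ : ℝ → ℝ := fun u => c * Real.exp (-u) with hφ
  have himg : φ '' Ioi 0 = Ioo 0 c := by
    ext x
    simp only [mem_image, mem_Ioi, mem_Ioo, hφ]
    constructor
    · rintro ⟨u, hu, rfl⟩
      refine ⟨by positivity, ?_⟩
      have hexp : Real.exp (-u) < 1 := by
        rw [Real.exp_lt_one_iff]; linarith
      calc c * Real.exp (-u) < c * 1 := by gcongr
        _ = c := mul_one c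
    · rintro ⟨hx0, hxc⟩
      refine ⟨Real.log (c / x), Real.log_pos ?_, ?_⟩
      · rw [lt_div_iff₀ hx0, one_mul]; exact hxc
      · rw [Real.exp_neg, Real.exp_log (by positivity)]
        field_simp
  have hderiv : ∀ u ∈ Ioi (0:ℝ),
      HasDerivWithinAt φ (-(c * Real.exp (-u))) (Ioi 0) u := by
    intro u _
    have h1 : HasDerivAt (fun x : ℝ => c * Real.exp (-x)) (c * (Real.exp (-u) * (-1))) u :=
      ((hasDerivAt_neg u).exp).const_mul c
    have h2 : HasDerivAt φ (-(c * Real.exp (-u))) u := by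
      convert h1 using 1; ring
    exact h2.hasDerivWithinAt
  have hinj : InjOn φ (Ioi 0) := by
    intro u _ v _ huv
    simp only [hφ] at huv
    have h1 := mul_left_cancel₀ hc0.ne' huv
    exact neg_injective (Real.exp_injective h1)
  -- the transferred integrand
  have htrans : ∀ u ∈ Ioi (0:ℝ),
      |(-(c * Real.exp (-u)))| • h (φ u)
        = (CC * c ^ ((a+2)/2)) * (u ^ ((a+4)/2 - 1) * Real.exp (-((a+2)/2 * u))) := by
    intro u _
    have habs : |(-(c * Real.exp (-u)))| = c * Real.exp (-u) := by
      rw [abs_neg, abs_of_pos (by positivity)]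
    have harg : 4 * Real.pi * (c * Real.exp (-u)) = Real.exp (-u) := by
      rw [← mul_assoc, hc1, one_mul]
    have hlog : Real.log ((4 * Real.pi * (c * Real.exp (-u)))⁻¹) = u := by
      rw [harg, ← Real.exp_neg, neg_neg, Real.log_exp]
    rw [habs, smul_eq_mul]
    simp only [hh, hφ]
    rw [hlog]
    rw [Real.mul_rpow hc0.le (Real.exp_nonneg _), ← Real.exp_mul]
    have e1 : Real.exp (-u) * Real.exp (-u * (a/2)) = Real.exp (-((a+2)/2 * u)) := by
      rw [← Real.exp_add]; congr 1; ring
    have e2 : c ^ (a/2) * c = c ^ ((a+2)/2) := by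
      rw [show (a+2)/2 = a/2 + 1 by ring, Real.rpow_add_one hc0.ne']
    calc c * Real.exp (-u) * (CC * (c ^ (a/2) * Real.exp (-u * (a/2)) * u ^ ((a+2)/2)))
        = (c ^ (a/2) * c) * (Real.exp (-u) * Real.exp (-u * (a/2))) * CC * u ^ ((a+2)/2) := by
          ring
      _ = c ^ ((a+2)/2) * Real.exp (-((a+2)/2 * u)) * CC * u ^ ((a+2)/2) := by rw [e1, e2]
      _ = CC * c ^ ((a+2)/2) * (u ^ ((a+4)/2 - 1) * Real.exp (-((a+2)/2 * u))) := by
          rw [show (a+4)/2 - 1 = (a+2)/2 by ring]; ring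
  -- integrability of the Gamma-type integrand
  have hα0 : (0:ℝ) < (a+4)/2 := by linarith
  have hr0 : (0:ℝ) < (a+2)/2 := by linarith
  have hGint : IntegrableOn (fun u : ℝ => u ^ ((a+4)/2 - 1) * Real.exp (-((a+2)/2 * u)))
      (Ioi 0) := by
    have h1 : IntegrableOn (fun x : ℝ => Real.exp (-((a+2)/2 * x))
        * ((a+2)/2 * x) ^ ((a+4)/2 - 1)) (Ioi 0) := by
      have := (integrableOn_Ioi_comp_mul_left_iff
        (fun x : ℝ => Real.exp (-x) * x ^ ((a+4)/2 - 1)) 0 hr0).mpr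
        (by rw [mul_zero]; exact Real.GammaIntegral_convergent hα0)
      simpa using this
    have h2 := h1.const_mul (((a+2)/2 : ℝ) ^ ((a+4)/2 - 1))⁻¹
    refine IntegrableOn.congr_fun h2 (fun x hx => ?_) measurableSet_Ioi
    have hx0 : (0:ℝ) < x := hx
    have hne : (((a+2)/2 : ℝ)) ^ ((a+4)/2 - 1) ≠ 0 := (Real.rpow_pos_of_pos hr0 _).ne'
    rw [Real.mul_rpow hr0.le hx0.le]
    field_simp
  have hHint : IntegrableOn h (Ioo 0 c) := by
    rw [← himg,
      integrableOn_image_iff_integrableOn_abs_deriv_smul measurableSet_Ioi hderiv hinj]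
    exact IntegrableOn.congr_fun (hGint.const_mul (CC * c ^ ((a+2)/2)))
      (fun u hu => (htrans u hu).symm) measurableSet_Ioi
  have hhnn : 0 ≤ᵐ[volume.restrict (Ioo (0:ℝ) c)] h := by
    refine (ae_restrict_iff' measurableSet_Ioo).mpr (Filter.Eventually.of_forall fun s hs => ?_)
    obtain ⟨hs0, hsc⟩ := hs
    have h1 : 4 * Real.pi * s ≤ 1 := by
      calc 4 * Real.pi * s ≤ 4 * Real.pi * c := by gcongr
        _ = 1 := hc1
    have hL0 : 0 ≤ Real.log ((4 * Real.pi * s)⁻¹) := by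
      rw [Real.log_inv]
      have := Real.log_nonpos (by positivity) h1
      linarith
    simp only [hh]
    have h2 : (0:ℝ) ≤ s ^ (a/2) := Real.rpow_nonneg hs0.le _
    have h3 : (0:ℝ) ≤ Real.log ((4 * Real.pi * s)⁻¹) ^ ((a+2)/2) := Real.rpow_nonneg hL0 _
    positivity
  rw [← ofReal_integral_eq_lintegral_ofReal hHint hhnn]
  congr 1
  rw [← himg, integral_image_eq_integral_abs_deriv_smul measurableSet_Ioi hderiv hinj]
  rw [setIntegral_congr_fun measurableSet_Ioi htrans]
  rw [MeasureTheory.integral_const_mul]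
  rw [Real.integral_rpow_mul_exp_neg_mul_Ioi hα0 hr0]

end Aux2

section Main
open Set Metric

/-- **Explicit value of the time moment of the heat mean value kernel:**
`∬ s 𝓗(y,s) dy ds = σ(S^{n-1}) n^{(n+2)/2} Γ((n+4)/2) / (2 (n+2)^{(n+6)/2} π^{(n+2)/2})`. -/
theorem heatMVKernel_time_moment_value (n : ℕ) (hn : 1 ≤ n) :
    ∫ p : EuclideanSpace ℝ (Fin n) × ℝ, p.2 * heatMVKernel n p
      = sphereSurfaceMeasure n * (n : ℝ) ^ (((n : ℝ) + 2) / 2) * Real.Gamma (((n : ℝ) + 4) / 2)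
          / (2 * ((n : ℝ) + 2) ^ (((n : ℝ) + 6) / 2) * Real.pi ^ (((n : ℝ) + 2) / 2)) := by
  have hσ : 0 ≤ sphereSurfaceMeasure n := ENNReal.toReal_nonneg
  have hmeas : Measurable fun p : EuclideanSpace ℝ (Fin n) × ℝ => p.2 * heatMVKernel n p :=
    measurable_snd.mul (heatMVKernel_measurable n)
  rw [integral_eq_lintegral_of_nonneg_ae
    (Filter.Eventually.of_forall (heatMVKernel_nonneg n)) hmeas.aestronglyMeasurable]
  rw [Measure.volume_eq_prod, lintegral_prod_symm _ hmeas.ennreal_ofReal.aemeasurable]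
  have hinner : ∀ s : ℝ, ∫⁻ y : EuclideanSpace ℝ (Fin n),
      ENNReal.ofReal ((y, s).2 * heatMVKernel n (y, s))
      = ENNReal.ofReal (if 0 < s then
          sphereSurfaceMeasure n
            * Real.sqrt (-(2 * n * s * Real.log (4 * Real.pi * s))) ^ (n + 2)
            / (4 * s * ((n:ℝ) + 2)) else 0) := by
    intro s
    by_cases hs : 0 < s
    · rw [if_pos hs]
      exact inner_lintegral n hn hs
    · rw [if_neg hs]
      have hz : ∀ y : EuclideanSpace ℝ (Fin n), (y, s).2 * heatMVKernel n (y, s) = 0 := by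
        intro y
        rw [heatMVKernel, if_neg (fun hcon => hs hcon.1), mul_zero]
      simp [hz]
  simp_rw [hinner]
  rw [outer_value n hn hσ]
  rw [ENNReal.toReal_ofReal (by
    refine mul_nonneg (mul_nonneg (div_nonneg (mul_nonneg hσ (by positivity)) (by positivity))
      (by positivity)) (by positivity))]
  have key := key_const (show (0:ℝ) < (n:ℝ) by exact_mod_cast hn)
  linear_combination (sphereSurfaceMeasure n * Real.Gamma (((n:ℝ) + 4) / 2)) * key

end Main
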